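/- In the module A_μ over S(l₁,l₂,l₃;0,Γ), for every p ∈ {1,…,l}, the element ∂_p (when l₂+l₃ contributes, realized inside S via the generating relations) acts by ∂_p · v_{β,i} = (β_p + μ_p) v_{β,i} + i_p v_{β,i−1_[p]}; consequently each v_{β,i} is a generalized weight vector of weight β + μ, and the generalized weight space decomposition of A_μ is A_μ = ⊕_{β∈Γ} span{v_{β,i} : i ∈ ℕ^{l₁+l₂}}, with each weight space (A_μ)^{(0)}_{β+μ} = F·v_{β,0} one-dimensional. -/

import Mathlib

open scoped BigOperators

namespace SDF

variable (F : Type) [Field F] [IsAlgClosed F] [CharZero F]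
variable (l₁ l₂ l₃ : ℕ) (Γ : AddSubgroup (Fin (l₂ + l₃) → F))

/-- The semigroup algebra `A(l₁,l₂,l₃;Γ) = F[Γ × ℕ^{l₁+l₂}]`,
with basis `x^α t^i` for `α ∈ Γ`, `i ∈ ℕ^{l₁+l₂}`. -/
abbrev Alg : Type := AddMonoidAlgebra F (↥Γ × (Fin (l₁ + l₂) →₀ ℕ))

/-- The basis monomial `x^α t^i`. -/
noncomputable def mono (α : Γ) (i : Fin (l₁ + l₂) →₀ ℕ) : Alg F l₁ l₂ l₃ Γ :=
  AddMonoidAlgebra.single (α, i) 1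

/-- The `p`-th coordinate of `α ∈ Γ ⊆ F^{l₂+l₃}`, with the convention `α_p = 0` for `p ≤ l₁`. -/
def acoord (p : Fin (l₁ + l₂ + l₃)) (α : Γ) : F :=
  if h : l₁ ≤ (p : ℕ) then (α : Fin (l₂ + l₃) → F) ⟨(p : ℕ) - l₁, by have := p.isLt; omega⟩
  else 0

/-- The `p`-th coordinate of a general `μ ∈ F^{l₂+l₃}`, with the convention `μ_p = 0` for `p ≤ l₁`. -/
def fcoord (p : Fin (l₁ + l₂ + l₃)) (μ : Fin (l₂ + l₃) → F) : F :=
  if h : l₁ ≤ (p : ℕ) then μ ⟨(p : ℕ) - l₁, by have := p.isLt; omega⟩ else 0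

/-- The `p`-th component of `i ∈ ℕ^{l₁+l₂}`, with the convention `i_p = 0` for `p > l₁+l₂`. -/
def icoord (p : Fin (l₁ + l₂ + l₃)) (i : Fin (l₁ + l₂) →₀ ℕ) : ℕ :=
  if h : (p : ℕ) < l₁ + l₂ then i ⟨(p : ℕ), h⟩ else 0

/-- `i - 1_[p]` (truncated subtraction; only used with coefficient `i_p`). -/
noncomputable def lower (p : Fin (l₁ + l₂ + l₃)) (i : Fin (l₁ + l₂) →₀ ℕ) : Fin (l₁ + l₂) →₀ ℕ :=
  if h : (p : ℕ) < l₁ + l₂ then i - Finsupp.single ⟨(p : ℕ), h⟩ 1 else i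

/-- The derivation `∂_p` of `A(l₁,l₂,l₃;Γ)`:
`∂_p(x^α t^i) = α_p x^α t^i + i_p x^α t^{i - 1_[p]}`. -/
noncomputable def pd (p : Fin (l₁ + l₂ + l₃)) :
    Alg F l₁ l₂ l₃ Γ →ₗ[F] Alg F l₁ l₂ l₃ Γ :=
  (Finsupp.lsum F fun g : ↥Γ × (Fin (l₁ + l₂) →₀ ℕ) =>
    LinearMap.toSpanSingleton F (Alg F l₁ l₂ l₃ Γ)
      (acoord F l₁ l₂ l₃ Γ p g.1 • mono F l₁ l₂ l₃ Γ g.1 g.2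
        + (icoord l₁ l₂ l₃ p g.2 : F) • mono F l₁ l₂ l₃ Γ g.1 (lower l₁ l₂ l₃ p g.2)))
      ∘ₗ (AddMonoidAlgebra.coeffLinearEquiv F).toLinearMap

/-- The Witt algebra `W(l₁,l₂,l₃;Γ) = A·D`; the tuple `u : Wt` represents `Σ_p u_p ∂_p`. -/
abbrev Wt : Type := Fin (l₁ + l₂ + l₃) → Alg F l₁ l₂ l₃ Γ

/-- The Lie bracket of `W(l₁,l₂,l₃;Γ)`:
`[Σ_p u_p ∂_p, Σ_q v_q ∂_q] = Σ_{p,q} (u_p ∂_p(v_q) - v_p ∂_p(u_q)) ∂_q`. -/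
noncomputable def wbr (u v : Wt F l₁ l₂ l₃ Γ) : Wt F l₁ l₂ l₃ Γ :=
  fun r => ∑ p, (u p * pd F l₁ l₂ l₃ Γ p (v r) - v p * pd F l₁ l₂ l₃ Γ p (u r))

/-- `D_{p,q}(u) = ∂_p(u) ∂_q - ∂_q(u) ∂_p`. -/
noncomputable def Dpq (p q : Fin (l₁ + l₂ + l₃)) (u : Alg F l₁ l₂ l₃ Γ) :
    Wt F l₁ l₂ l₃ Γ :=
  Pi.single q (pd F l₁ l₂ l₃ Γ p u) - Pi.single p (pd F l₁ l₂ l₃ Γ q u)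

/-- The divergence-free algebra `S(l₁,l₂,l₃;0,Γ) = Span{D_{p,q}(u)}`. -/
noncomputable def Ssub : Submodule F (Wt F l₁ l₂ l₃ Γ) :=
  Submodule.span F {w | ∃ p q u, w = Dpq F l₁ l₂ l₃ Γ p q u}

/-- `Γ` is nondegenerate: it contains an `F`-basis of `F^{l₂+l₃}`, i.e. it spans. -/
def Nondeg : Prop := Submodule.span F (Γ : Set (Fin (l₂ + l₃) → F)) = ⊤

/-- The divergence `div(Σ_p u_p ∂_p) = Σ_p ∂_p(u_p)`. -/
noncomputable def dvg (w : Wt F l₁ l₂ l₃ Γ) : Alg F l₁ l₂ l₃ Γ :=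
  ∑ p, pd F l₁ l₂ l₃ Γ p (w p)

/-- The action of `Σ_p u_p ∂_p ∈ W` on `A_μ` (the space `A` with basis `v_{β,i}` the monomials):
`(u ∂_p) . v = u * (∂_p + μ_p) v`. On basis elements this gives exactly the defining formulas
of the module `A_μ`. -/
noncomputable def actW (μ : Fin (l₂ + l₃) → F) (X : Wt F l₁ l₂ l₃ Γ) :
    Alg F l₁ l₂ l₃ Γ →ₗ[F] Alg F l₁ l₂ l₃ Γ :=
  ∑ p, (LinearMap.mulLeft F (X p)).comp
    (pd F l₁ l₂ l₃ Γ p + fcoord F l₁ l₂ l₃ p μ • LinearMap.id)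

/-- The element `Σ_p a_p ∂_p` of `D ⊆ W`. -/
noncomputable def wD (a : Fin (l₁ + l₂ + l₃) → F) : Wt F l₁ l₂ l₃ Γ :=
  fun p => algebraMap F (Alg F l₁ l₂ l₃ Γ) (a p)

/-- The element `∂_p ∈ W`. -/
noncomputable def wdelta (p : Fin (l₁ + l₂ + l₃)) : Wt F l₁ l₂ l₃ Γ :=
  Pi.single p 1

/-- `β(∂) = Σ_{p>l₁} a_p β_p` for `∂ = Σ_p a_p ∂_p`. -/
def beval (β : Fin (l₂ + l₃) → F) (a : Fin (l₁ + l₂ + l₃) → F) : F :=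
  ∑ p, a p * fcoord F l₁ l₂ l₃ p β

/-!
On the monomial `v_{β,i}`, `∂_p` acts as the scalar `β_p + μ_p` plus the lowering operator
`v_{β,i} ↦ i_p v_{β,i-1_[p]}`, which strictly decreases `i_p`; this gives the action formula and
the nilpotence at once. For a weight vector `v` of weight `β + μ`, comparing coefficients of
`∂_p v = β_p v` relates the coefficient at `(γ, i)` to the one at `(γ, i + 1_[p])`: if `γ_p ≠ β_p`
the coefficients along the ray `i + ℕ·1_[p]` vanish by descending from a point outside the finite
support, and if `γ = β` the factor `i_p + 1 ≠ 0` (characteristic zero) kills every coefficient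
with a nonzero index. So `v` is supported at `(β, 0)`.
-/

theorem _root_.Finsupp.tsub_single_one_eq_iff {α : Type*} {p : α} {i i' : α →₀ ℕ}
    (hp : i' p ≠ 0) :
    i' - Finsupp.single p 1 = i ↔ i' = i + Finsupp.single p 1 := by
  constructor
  · rintro rfl
    exact (tsub_add_cancel_of_le (by simpa [Finsupp.single_le_iff, Nat.one_le_iff_ne_zero])).symm
  · rintro rfl
    exact add_tsub_cancel_right _ _

theorem _root_.Finsupp.exists_apply_eq_zero_of_injective {M R : Type*} [Zero R] (f : M →₀ R)
    {g : ℕ → M} (hg : g.Injective) : ∃ m, f (g m) = 0 := by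
  by_contra! h
  exact Set.infinite_of_injective_forall_mem hg (fun m => Finsupp.mem_support_iff.2 (h m))
    f.support.finite_toSet

section

variable {F l₁ l₂ l₃ Γ}

omit [IsAlgClosed F] [CharZero F]

theorem pd_single (p : Fin (l₁ + l₂ + l₃)) (β : Γ) (i : Fin (l₁ + l₂) →₀ ℕ) (c : F) :
    pd F l₁ l₂ l₃ Γ p (AddMonoidAlgebra.single (β, i) c) =
      c • (acoord F l₁ l₂ l₃ Γ p β • mono F l₁ l₂ l₃ Γ β i
        + (icoord l₁ l₂ l₃ p i : F) • mono F l₁ l₂ l₃ Γ β (lower l₁ l₂ l₃ p i)) := by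
  simp [pd, AddMonoidAlgebra.coeffLinearEquiv]

theorem pd_mono (p : Fin (l₁ + l₂ + l₃)) (β : Γ) (i : Fin (l₁ + l₂) →₀ ℕ) :
    pd F l₁ l₂ l₃ Γ p (mono F l₁ l₂ l₃ Γ β i) =
      acoord F l₁ l₂ l₃ Γ p β • mono F l₁ l₂ l₃ Γ β i
        + (icoord l₁ l₂ l₃ p i : F) • mono F l₁ l₂ l₃ Γ β (lower l₁ l₂ l₃ p i) :=
  (pd_single p β i 1).trans (one_smul F _)

theorem actW_wdelta (μ : Fin (l₂ + l₃) → F) (p : Fin (l₁ + l₂ + l₃)) :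
    actW F l₁ l₂ l₃ Γ μ (wdelta F l₁ l₂ l₃ Γ p) =
      pd F l₁ l₂ l₃ Γ p + fcoord F l₁ l₂ l₃ p μ • LinearMap.id := by
  rw [actW, Fintype.sum_eq_single p fun q hq => by simp [wdelta, Pi.single_eq_of_ne hq]]
  simp [wdelta]

theorem actW_wdelta_mono (μ : Fin (l₂ + l₃) → F) (p : Fin (l₁ + l₂ + l₃)) (β : Γ)
    (i : Fin (l₁ + l₂) →₀ ℕ) :
    actW F l₁ l₂ l₃ Γ μ (wdelta F l₁ l₂ l₃ Γ p) (mono F l₁ l₂ l₃ Γ β i) =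
      (acoord F l₁ l₂ l₃ Γ p β + fcoord F l₁ l₂ l₃ p μ) • mono F l₁ l₂ l₃ Γ β i
        + (icoord l₁ l₂ l₃ p i : F) • mono F l₁ l₂ l₃ Γ β (lower l₁ l₂ l₃ p i) := by
  rw [actW_wdelta, LinearMap.add_apply, pd_mono, add_smul]
  simp only [LinearMap.smul_apply, LinearMap.id_apply]
  abel

theorem actW_wdelta_eq_smul_iff (μ : Fin (l₂ + l₃) → F) (p : Fin (l₁ + l₂ + l₃)) (a : F)
    (v : Alg F l₁ l₂ l₃ Γ) :
    actW F l₁ l₂ l₃ Γ μ (wdelta F l₁ l₂ l₃ Γ p) v = (a + fcoord F l₁ l₂ l₃ p μ) • v ↔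
      pd F l₁ l₂ l₃ Γ p v = a • v := by
  rw [actW_wdelta, LinearMap.add_apply, LinearMap.smul_apply, LinearMap.id_apply, add_smul,
    add_left_inj]

theorem icoord_castAdd (p : Fin (l₁ + l₂)) (i : Fin (l₁ + l₂) →₀ ℕ) :
    icoord l₁ l₂ l₃ (Fin.castAdd l₃ p) i = i p := by
  simp [icoord]

theorem lower_castAdd (p : Fin (l₁ + l₂)) (i : Fin (l₁ + l₂) →₀ ℕ) :
    lower l₁ l₂ l₃ (Fin.castAdd l₃ p) i = i - Finsupp.single p 1 := by
  simp [lower]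

theorem icoord_natAdd (r : Fin l₃) (i : Fin (l₁ + l₂) →₀ ℕ) :
    icoord l₁ l₂ l₃ (Fin.natAdd (l₁ + l₂) r) i = 0 := by
  simp [icoord]

theorem lower_natAdd (r : Fin l₃) (i : Fin (l₁ + l₂) →₀ ℕ) :
    lower l₁ l₂ l₃ (Fin.natAdd (l₁ + l₂) r) i = i := by
  simp [lower]

theorem icoord_lower (p : Fin (l₁ + l₂ + l₃)) (i : Fin (l₁ + l₂) →₀ ℕ) :
    icoord l₁ l₂ l₃ p (lower l₁ l₂ l₃ p i) = icoord l₁ l₂ l₃ p i - 1 := by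
  induction p using Fin.addCases with
  | left p => simp [icoord_castAdd, lower_castAdd]
  | right r => simp [icoord_natAdd, lower_natAdd]

theorem exists_acoord_ne_of_ne {γ β : Γ} (h : γ ≠ β) :
    ∃ p, acoord F l₁ l₂ l₃ Γ p γ ≠ acoord F l₁ l₂ l₃ Γ p β := by
  obtain ⟨q, hq⟩ := Function.ne_iff.mp (Subtype.coe_injective.ne h)
  refine ⟨⟨l₁ + q, by omega⟩, ?_⟩
  simpa [acoord] using hq

theorem coeff_pd_castAdd (p : Fin (l₁ + l₂)) (v : Alg F l₁ l₂ l₃ Γ) (γ : Γ)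
    (i : Fin (l₁ + l₂) →₀ ℕ) :
    (pd F l₁ l₂ l₃ Γ (Fin.castAdd l₃ p) v).coeff (γ, i) =
      acoord F l₁ l₂ l₃ Γ (Fin.castAdd l₃ p) γ * v.coeff (γ, i)
        + (i p + 1 : F) * v.coeff (γ, i + Finsupp.single p 1) := by
  classical
  induction v using AddMonoidAlgebra.induction_linear with
  | zero => simp
  | add f g hf hg =>
    simp only [map_add, AddMonoidAlgebra.coeff_add, Finsupp.add_apply, hf, hg]
    ring
  | single a c =>
    obtain ⟨γ', i'⟩ := a
    simp only [pd_single, icoord_castAdd, lower_castAdd, mono, AddMonoidAlgebra.coeff_smul,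
      AddMonoidAlgebra.coeff_add, AddMonoidAlgebra.coeff_single, Finsupp.smul_apply,
      Finsupp.add_apply, Finsupp.single_apply, Prod.mk.injEq, smul_eq_mul]
    by_cases hγ : γ' = γ
    · subst hγ
      by_cases hi : i' = i + Finsupp.single p 1
      · subst hi
        simp [mul_comm]
      · simp only [true_and, hi, if_false, mul_zero, add_zero]
        have hlower : (i' p : F) * (if i' - Finsupp.single p 1 = i then 1 else 0) = 0 := by
          by_cases hp : i' p = 0
          · simp [hp]
          · simp [Finsupp.tsub_single_one_eq_iff hp, hi]
        rw [hlower]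
        split_ifs <;> ring
    · simp [hγ]

theorem coeff_pd_natAdd (r : Fin l₃) (v : Alg F l₁ l₂ l₃ Γ)
    (g : ↥Γ × (Fin (l₁ + l₂) →₀ ℕ)) :
    (pd F l₁ l₂ l₃ Γ (Fin.natAdd (l₁ + l₂) r) v).coeff g =
      acoord F l₁ l₂ l₃ Γ (Fin.natAdd (l₁ + l₂) r) g.1 * v.coeff g := by
  classical
  induction v using AddMonoidAlgebra.induction_linear with
  | zero => simp
  | add f g hf hg =>
    simp only [map_add, AddMonoidAlgebra.coeff_add, Finsupp.add_apply, hf, hg]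
    ring
  | single a c =>
    obtain ⟨γ', i'⟩ := a
    simp only [pd_single, icoord_natAdd, lower_natAdd, mono, Nat.cast_zero, zero_smul, add_zero,
      AddMonoidAlgebra.coeff_smul, AddMonoidAlgebra.coeff_single, Finsupp.smul_apply,
      Finsupp.single_apply, smul_eq_mul]
    split_ifs with h
    · simp [← h, mul_comm]
    · simp

theorem coeff_eq_zero_of_pd_eq_smul {p : Fin (l₁ + l₂ + l₃)} {c : F} {v : Alg F l₁ l₂ l₃ Γ}
    (hv : pd F l₁ l₂ l₃ Γ p v = c • v) {γ : Γ} (hγ : acoord F l₁ l₂ l₃ Γ p γ ≠ c)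
    (i : Fin (l₁ + l₂) →₀ ℕ) : v.coeff (γ, i) = 0 := by
  have hcoeff g := congrArg (fun w : Alg F l₁ l₂ l₃ Γ => w.coeff g) hv
  simp only [AddMonoidAlgebra.coeff_smul, Finsupp.smul_apply, smul_eq_mul] at hcoeff
  induction p using Fin.addCases with
  | left p =>
    have step j (hj : v.coeff (γ, j + Finsupp.single p 1) = 0) : v.coeff (γ, j) = 0 := by
      have h := hcoeff (γ, j)
      rw [coeff_pd_castAdd, hj, mul_zero, add_zero] at h
      exact (mul_eq_zero.mp (by linear_combination h)).resolve_left (sub_ne_zero.mpr hγ)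
    have descend (m : ℕ) : ∀ j, v.coeff (γ, j + Finsupp.single p m) = 0 → v.coeff (γ, j) = 0 := by
      induction m with
      | zero => simp
      | succ m ih =>
        exact fun j hj => ih j (step _ (by rwa [add_assoc, ← Finsupp.single_add]))
    obtain ⟨m, hm⟩ := v.coeff.exists_apply_eq_zero_of_injective
      ((Prod.mk_right_injective γ).comp ((add_right_injective i).comp (Finsupp.single_injective p)))
    exact descend m i hm
  | right r =>
    have h := hcoeff (γ, i)
    rw [coeff_pd_natAdd] at h
    exact (mul_eq_zero.mp (by linear_combination h)).resolve_left (sub_ne_zero.mpr hγ)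

theorem coeff_add_single_eq_zero_of_pd_eq_smul [CharZero F] {p : Fin (l₁ + l₂)} {β : Γ}
    {v : Alg F l₁ l₂ l₃ Γ}
    (hv : pd F l₁ l₂ l₃ Γ (Fin.castAdd l₃ p) v = acoord F l₁ l₂ l₃ Γ (Fin.castAdd l₃ p) β • v)
    (i : Fin (l₁ + l₂) →₀ ℕ) : v.coeff (β, i + Finsupp.single p 1) = 0 := by
  have h := congrArg (fun w : Alg F l₁ l₂ l₃ Γ => w.coeff (β, i)) hv
  simp only [coeff_pd_castAdd, AddMonoidAlgebra.coeff_smul, Finsupp.smul_apply, smul_eq_mul,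
    add_eq_left] at h
  exact (mul_eq_zero.mp h).resolve_left (Nat.cast_add_one_ne_zero _)

theorem mem_span_mono_zero_of_forall_pd_eq_smul [CharZero F] {β : Γ} {v : Alg F l₁ l₂ l₃ Γ}
    (hv : ∀ p, pd F l₁ l₂ l₃ Γ p v = acoord F l₁ l₂ l₃ Γ p β • v) :
    v ∈ Submodule.span F {mono F l₁ l₂ l₃ Γ β 0} := by
  have hsupp : ∀ g ≠ (β, 0), v.coeff g = 0 := by
    rintro ⟨γ, i⟩ hg
    by_cases hγ : γ = β
    · subst hγ
      obtain ⟨p, hp⟩ : ∃ p, i p ≠ 0 := Finsupp.ne_iff.mp fun hi : i = 0 => hg (by rw [hi])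
      rw [(Finsupp.tsub_single_one_eq_iff hp).mp rfl]
      exact coeff_add_single_eq_zero_of_pd_eq_smul (hv _) _
    · obtain ⟨p, hp⟩ := exists_acoord_ne_of_ne (l₁ := l₁) (l₂ := l₂) hγ
      exact coeff_eq_zero_of_pd_eq_smul (hv p) hp i
  have hv : v ∈ AddMonoidAlgebra.supported F F {(β, 0)} :=
    AddMonoidAlgebra.mem_supported'.mpr (by simpa using hsupp)
  rwa [AddMonoidAlgebra.supported_eq_span_single, Set.image_singleton] at hv

theorem pd_mono_zero (p : Fin (l₁ + l₂ + l₃)) (β : Γ) :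
    pd F l₁ l₂ l₃ Γ p (mono F l₁ l₂ l₃ Γ β 0) =
      acoord F l₁ l₂ l₃ Γ p β • mono F l₁ l₂ l₃ Γ β 0 := by
  simp [pd_mono, icoord]

theorem weightSpace_eq_span_mono_zero [CharZero F] (μ : Fin (l₂ + l₃) → F) (β : Γ) :
    {v : Alg F l₁ l₂ l₃ Γ | ∀ p : Fin (l₁ + l₂ + l₃),
        actW F l₁ l₂ l₃ Γ μ (wdelta F l₁ l₂ l₃ Γ p) v =
          (acoord F l₁ l₂ l₃ Γ p β + fcoord F l₁ l₂ l₃ p μ) • v} =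
      ↑(Submodule.span F {mono F l₁ l₂ l₃ Γ β 0}) := by
  ext v
  simp only [Set.mem_ofPred_eq, SetLike.mem_coe, actW_wdelta_eq_smul_iff]
  refine ⟨mem_span_mono_zero_of_forall_pd_eq_smul, fun hv p => ?_⟩
  obtain ⟨c, rfl⟩ := Submodule.mem_span_singleton.mp hv
  rw [map_smul, pd_mono_zero, smul_comm]

theorem actW_wdelta_sub_smul_mono (μ : Fin (l₂ + l₃) → F) (p : Fin (l₁ + l₂ + l₃)) (β : Γ)
    (i : Fin (l₁ + l₂) →₀ ℕ) :
    (actW F l₁ l₂ l₃ Γ μ (wdelta F l₁ l₂ l₃ Γ p)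
        - (acoord F l₁ l₂ l₃ Γ p β + fcoord F l₁ l₂ l₃ p μ) • 1 :
          Module.End F (Alg F l₁ l₂ l₃ Γ)) (mono F l₁ l₂ l₃ Γ β i) =
      (icoord l₁ l₂ l₃ p i : F) • mono F l₁ l₂ l₃ Γ β (lower l₁ l₂ l₃ p i) := by
  rw [LinearMap.sub_apply, actW_wdelta_mono, LinearMap.smul_apply, Module.End.one_apply,
    add_sub_cancel_left]

theorem pow_actW_wdelta_sub_smul_mono (μ : Fin (l₂ + l₃) → F) (p : Fin (l₁ + l₂ + l₃)) (β : Γ)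
    (i : Fin (l₁ + l₂) →₀ ℕ) :
    ((actW F l₁ l₂ l₃ Γ μ (wdelta F l₁ l₂ l₃ Γ p)
        - (acoord F l₁ l₂ l₃ Γ p β + fcoord F l₁ l₂ l₃ p μ) • 1 :
          Module.End F (Alg F l₁ l₂ l₃ Γ)) ^ (icoord l₁ l₂ l₃ p i + 1))
      (mono F l₁ l₂ l₃ Γ β i) = 0 := by
  induction h : icoord l₁ l₂ l₃ p i generalizing i with
  | zero => rw [pow_one, actW_wdelta_sub_smul_mono, h, Nat.cast_zero, zero_smul]
  | succ n ih =>
    rw [pow_succ, Module.End.mul_apply, actW_wdelta_sub_smul_mono, map_smul,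
      ih _ (by rw [icoord_lower, h, Nat.add_sub_cancel]), smul_zero]

theorem iSup_span_mono_eq_top :
    ⨆ β : Γ, Submodule.span F {v : Alg F l₁ l₂ l₃ Γ | ∃ i, v = mono F l₁ l₂ l₃ Γ β i} = ⊤ := by
  rw [Submodule.iSup_span, eq_top_iff, ← (AddMonoidAlgebra.basis _ F).span_eq]
  refine Submodule.span_mono ?_
  rintro _ ⟨⟨β, i⟩, rfl⟩
  exact Set.mem_iUnion.mpr ⟨β, i, rfl⟩

end

theorem stmt13
    (μ : Fin (l₂ + l₃) → F) :
    (∀ (p : Fin (l₁ + l₂ + l₃)) (β : Γ) (i : Fin (l₁ + l₂) →₀ ℕ),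
        actW F l₁ l₂ l₃ Γ μ (wdelta F l₁ l₂ l₃ Γ p) (mono F l₁ l₂ l₃ Γ β i) =
          (acoord F l₁ l₂ l₃ Γ p β + fcoord F l₁ l₂ l₃ p μ) • mono F l₁ l₂ l₃ Γ β i
            + (icoord l₁ l₂ l₃ p i : F) •
                mono F l₁ l₂ l₃ Γ β (lower l₁ l₂ l₃ p i)) ∧
    (∀ (β : Γ) (i : Fin (l₁ + l₂) →₀ ℕ) (p : Fin (l₁ + l₂ + l₃)), ∃ n : ℕ,
        ((actW F l₁ l₂ l₃ Γ μ (wdelta F l₁ l₂ l₃ Γ p)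
            - (acoord F l₁ l₂ l₃ Γ p β + fcoord F l₁ l₂ l₃ p μ) • 1 :
              Module.End F (Alg F l₁ l₂ l₃ Γ)) ^ n)
          (mono F l₁ l₂ l₃ Γ β i) = 0) ∧
    (∀ β : Γ,
        {v : Alg F l₁ l₂ l₃ Γ | ∀ p : Fin (l₁ + l₂ + l₃),
            actW F l₁ l₂ l₃ Γ μ (wdelta F l₁ l₂ l₃ Γ p) v =
              (acoord F l₁ l₂ l₃ Γ p β + fcoord F l₁ l₂ l₃ p μ) • v} =
          ↑(Submodule.span F {mono F l₁ l₂ l₃ Γ β 0})) ∧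
    (⨆ β : Γ, Submodule.span F {v : Alg F l₁ l₂ l₃ Γ |
        ∃ i : Fin (l₁ + l₂) →₀ ℕ, v = mono F l₁ l₂ l₃ Γ β i}) = ⊤ :=
  ⟨actW_wdelta_mono μ, fun β i p => ⟨_, pow_actW_wdelta_sub_smul_mono μ p β i⟩,
    weightSpace_eq_span_mono_zero μ, iSup_span_mono_eq_top⟩

end SDF
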